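/- Let S be a nonzero graded submodule of M that is gr-sum-irreducible, i.e., whenever A and B are graded submodules of M with A ⊆ S, B ⊆ S, A ≠ S, B ≠ S, then A + B ≠ S. If rS = r²S for every homogeneous element r ∈ Γ with r ∉ Gr(Ann_Γ(S)), then S is a gr-C-2^A-secondary submodule of M. -/

import Mathlib

/-!
For homogeneous `r ∉ Gr(Ann S)` with `r • S = r² • S`, every `m ∈ S` splits as
`r • m' + (m - r • m')` with `r • m = r² • m'`, so `S = r • S + (ker r ∩ S)`, a sum of two
graded submodules of `S`. The second summand is proper because `r ∉ Ann S`, so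
sum-irreducibility forces `r • S = S`. If `r * s ∉ Gr(Ann S)`, then neither `r` nor `s` lies in it, hence
`r • S = r • (s • S) = (r * s) • S ⊆ L`.
-/

open Pointwise DirectSum

section Preliminaries

variable {G : Type*} [AddGroup G] [DecidableEq G]
variable {Γ : Type*} [CommRing Γ]
variable {M : Type*} [AddCommGroup M] [Module Γ M]

/-- `x` lies in the graded radical `Gr I`: for homogeneous `x` this is the defining
condition that some positive power of `x` lies in `I`. -/
def grMem (I : Ideal Γ) (x : Γ) : Prop := ∃ n : ℕ, 0 < n ∧ x ^ n ∈ I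

variable (𝒜 : G → AddSubgroup Γ) (ℳ : G → AddSubgroup M)
variable [GradedRing 𝒜] [DirectSum.Decomposition ℳ] [SetLike.GradedSMul 𝒜 ℳ]

/-- A graded submodule: closed under taking homogeneous components. -/
def IsGradedSubmodule (S : Submodule Γ M) : Prop :=
  ∀ (g : G) ⦃x : M⦄, x ∈ S → (DirectSum.decompose ℳ x g : M) ∈ S

/-- A graded ideal: closed under taking homogeneous components. -/
def IsGradedIdeal (I : Ideal Γ) : Prop :=
  ∀ (g : G) ⦃x : Γ⦄, x ∈ I → (DirectSum.decompose 𝒜 x g : Γ) ∈ I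

/-- A graded classical 2-absorbing secondary (gr-C-2^A-secondary) submodule:
a nonzero graded submodule `S` such that whenever `r, s` are homogeneous and `L` is a
graded submodule with `r*s • S ⊆ L`, either `r • S ⊆ L`, or `s • S ⊆ L`, or
`r*s ∈ Gr(Ann S)`. -/
def IsGrC2ASecondary (S : Submodule Γ M) : Prop :=
  S ≠ ⊥ ∧ IsGradedSubmodule ℳ S ∧
    ∀ r s : Γ, SetLike.IsHomogeneousElem 𝒜 r → SetLike.IsHomogeneousElem 𝒜 s →
      ∀ L : Submodule Γ M, IsGradedSubmodule ℳ L →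
        (r * s) • S ≤ L →
          r • S ≤ L ∨ s • S ≤ L ∨ grMem S.annihilator (r * s)

end Preliminaries

section Ungraded

variable {Γ : Type*} [CommRing Γ] {M : Type*} [AddCommGroup M] [Module Γ M]

theorem grMem_of_mem {I : Ideal Γ} {x : Γ} (hx : x ∈ I) : grMem I x :=
  ⟨1, one_pos, by rwa [pow_one]⟩

theorem grMem.mul_right {I : Ideal Γ} {x : Γ} (y : Γ) (hx : grMem I x) : grMem I (x * y) := by
  obtain ⟨n, hn, hxn⟩ := hx
  exact ⟨n, hn, by rw [mul_pow]; exact I.mul_mem_right _ hxn⟩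

theorem grMem.mul_left {I : Ideal Γ} {x : Γ} (y : Γ) (hx : grMem I x) : grMem I (y * x) :=
  mul_comm x y ▸ hx.mul_right y

theorem Submodule.pointwise_smul_sup_ker_inf_eq {r : Γ} {S : Submodule Γ M}
    (heq : r • S = (r ^ 2) • S) :
    r • S ⊔ (LinearMap.ker (LinearMap.lsmul Γ M r) ⊓ S) = S := by
  refine le_antisymm (sup_le (S.smul_le_self_of_tower r) inf_le_right) fun m hm => ?_
  obtain ⟨m', hm', hrm⟩ : ∃ m' ∈ S, r ^ 2 • m' = r • m :=
    (Submodule.mem_smul_pointwise_iff_exists _ _ _).mp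
      (heq ▸ Submodule.smul_mem_pointwise_smul m r S hm)
  have hker : m - r • m' ∈ LinearMap.ker (LinearMap.lsmul Γ M r) ⊓ S := by
    refine ⟨?_, S.sub_mem hm (S.smul_mem r hm')⟩
    rw [SetLike.mem_coe, LinearMap.mem_ker, LinearMap.lsmul_apply, smul_sub, smul_smul, ← pow_two,
      hrm, sub_self]
  simpa using Submodule.add_mem_sup (Submodule.smul_mem_pointwise_smul m' r S hm') hker

end Ungraded

section Graded

variable {G : Type*} [DecidableEq G] {Γ : Type*} [CommRing Γ]
variable {M : Type*} [AddCommGroup M] [Module Γ M] {ℳ : G → AddSubgroup M} [Decomposition ℳ]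

variable (ℳ) in
def IsGrSumIrreducible (S : Submodule Γ M) : Prop :=
  ∀ A B : Submodule Γ M, IsGradedSubmodule ℳ A → IsGradedSubmodule ℳ B →
    A ≤ S → B ≤ S → A ≠ S → B ≠ S → A ⊔ B ≠ S

theorem IsGradedSubmodule.inf {A B : Submodule Γ M} (hA : IsGradedSubmodule ℳ A)
    (hB : IsGradedSubmodule ℳ B) : IsGradedSubmodule ℳ (A ⊓ B) :=
  fun g _ hx => ⟨hA g hx.1, hB g hx.2⟩

variable [AddGroup G] {𝒜 : G → AddSubgroup Γ} [SetLike.GradedSMul 𝒜 ℳ]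

theorem decompose_smul_of_mem {d : G} {r : Γ} (hr : r ∈ 𝒜 d) (m : M) (g : G) :
    (decompose ℳ (r • m) (d + g) : M) = r • (decompose ℳ m g : M) := by
  induction m using DirectSum.Decomposition.inductionOn ℳ with
  | zero => simp
  | @homogeneous i x =>
      have hrx : r • (x : M) ∈ ℳ (d + i) := SetLike.GradedSMul.smul_mem hr x.2
      by_cases hig : i = g
      · subst hig
        rw [decompose_of_mem_same ℳ hrx, decompose_of_mem_same ℳ x.2]
      · rw [decompose_of_mem_ne ℳ hrx (by simpa using hig), decompose_of_mem_ne ℳ x.2 hig,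
          smul_zero]
  | add a b ha hb =>
      simp only [smul_add, decompose_add, DirectSum.add_apply, AddSubgroup.coe_add, ha, hb]

theorem IsGradedSubmodule.pointwise_smul {d : G} {r : Γ} (hr : r ∈ 𝒜 d) {S : Submodule Γ M}
    (hS : IsGradedSubmodule ℳ S) : IsGradedSubmodule ℳ (r • S) := by
  intro g x hx
  obtain ⟨y, hy, rfl⟩ := (Submodule.mem_smul_pointwise_iff_exists _ _ _).mp hx
  rw [← add_neg_cancel_left d g, decompose_smul_of_mem hr]
  exact Submodule.smul_mem_pointwise_smul _ _ _ (hS _ hy)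

theorem isGradedSubmodule_ker_lsmul {d : G} {r : Γ} (hr : r ∈ 𝒜 d) :
    IsGradedSubmodule ℳ (LinearMap.ker (LinearMap.lsmul Γ M r)) := by
  intro g x hx
  rw [LinearMap.mem_ker, LinearMap.lsmul_apply] at hx ⊢
  rw [← decompose_smul_of_mem hr, hx, decompose_zero, DirectSum.zero_apply,
    ZeroMemClass.coe_zero]

theorem IsGrSumIrreducible.pointwise_smul_eq_self {S : Submodule Γ M}
    (hirr : IsGrSumIrreducible ℳ S) (hS : IsGradedSubmodule ℳ S) {d : G} {r : Γ}
    (hr : r ∈ 𝒜 d) (hrS : r ∉ S.annihilator) (heq : r • S = (r ^ 2) • S) : r • S = S := by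
  by_contra hne
  have hker : LinearMap.ker (LinearMap.lsmul Γ M r) ⊓ S ≠ S := fun hkerS =>
    hrS <| Submodule.mem_annihilator.mpr fun m hm => (hkerS.symm ▸ hm : m ∈ _ ⊓ S).1
  exact hirr _ _ (hS.pointwise_smul hr) ((isGradedSubmodule_ker_lsmul hr).inf hS)
    (S.smul_le_self_of_tower r) inf_le_right hne hker
    (Submodule.pointwise_smul_sup_ker_inf_eq heq)

end Graded

variable {G : Type*} [AddGroup G] [DecidableEq G]
variable {Γ : Type*} [CommRing Γ]
variable {M : Type*} [AddCommGroup M] [Module Γ M]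
variable (𝒜 : G → AddSubgroup Γ) (ℳ : G → AddSubgroup M)
variable [GradedRing 𝒜] [DirectSum.Decomposition ℳ] [SetLike.GradedSMul 𝒜 ℳ]

/-- If `S` is a nonzero graded gr-sum-irreducible submodule of `M` and `r • S = r² • S`
for every homogeneous `r ∉ Gr(Ann S)`, then `S` is a gr-C-2^A-secondary submodule. -/
theorem stmt8 (S : Submodule Γ M) (hS0 : S ≠ ⊥) (hSg : IsGradedSubmodule ℳ S)
    (hirr : ∀ A B : Submodule Γ M, IsGradedSubmodule ℳ A → IsGradedSubmodule ℳ B →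
      A ≤ S → B ≤ S → A ≠ S → B ≠ S → A ⊔ B ≠ S)
    (h : ∀ r : Γ, SetLike.IsHomogeneousElem 𝒜 r → ¬ grMem S.annihilator r →
      r • S = (r ^ 2) • S) :
    IsGrC2ASecondary 𝒜 ℳ S := by
  have smul_eq_self : ∀ t, SetLike.IsHomogeneousElem 𝒜 t → ¬ grMem S.annihilator t →
      t • S = S := fun t ⟨_, ht⟩ hnt =>
    IsGrSumIrreducible.pointwise_smul_eq_self hirr hSg ht (mt grMem_of_mem hnt) (h t ⟨_, ht⟩ hnt)
  refine ⟨hS0, hSg, fun r s hr hs L _ hrsL => ?_⟩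
  by_cases hrs : grMem S.annihilator (r * s)
  · exact Or.inr (Or.inr hrs)
  have hrS := smul_eq_self r hr (mt (grMem.mul_right s) hrs)
  have hsS := smul_eq_self s hs (mt (grMem.mul_left r) hrs)
  left
  calc r • S = (r * s) • S := by rw [mul_smul, hsS, hrS]
    _ ≤ L := hrsL
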